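/- Let X₁ ~ N(μ₁, σ₁²) and X₂ ~ N(μ₂, σ₂²) be normal random variables, let S⁻ be their counter-monotonic sum, and let g be any distortion function with dual ḡ. If σ₁ ≥ σ₂, then ρ_g[S⁻] = ρ_g[X₁] + ρ_{ḡ}[X₂]; if σ₁ < σ₂, then ρ_g[S⁻] = ρ_{ḡ}[X₁] + ρ_g[X₂]. -/

import Mathlib

open MeasureTheory ProbabilityTheory Set

noncomputable section

variable {Ω : Type*} [MeasurableSpace Ω]

/-- The cumulative distribution function of the random variable `X` under `P`. -/
def rvCdf (P : Measure Ω) (X : Ω → ℝ) : ℝ → ℝ := fun x => (P {ω | X ω ≤ x}).toReal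

/-- The survival function `x ↦ P(X > x)`. -/
def rvSurv (P : Measure Ω) (X : Ω → ℝ) : ℝ → ℝ := fun x => (P {ω | x < X ω}).toReal

/-- The left inverse `F⁻¹(p) = inf {x | F x ≥ p}` of a cdf `F`. -/
def leftInv (F : ℝ → ℝ) (p : ℝ) : ℝ := sInf {x | p ≤ F x}

/-- The right inverse `F⁻¹⁺(p) = sup {x | F x ≤ p}` of a cdf `F`. -/
def rightInv (F : ℝ → ℝ) (p : ℝ) : ℝ := sSup {x | F x ≤ p}

/-- `g : [0,1] → [0,1]` is a distortion function: nondecreasing with `g 0 = 0`, `g 1 = 1`. -/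
def IsDistortion (g : ℝ → ℝ) : Prop :=
  MonotoneOn g (Icc 0 1) ∧ g 0 = 0 ∧ g 1 = 1 ∧ ∀ q ∈ Icc (0:ℝ) 1, g q ∈ Icc (0:ℝ) 1

/-- The dual distortion function `ḡ(q) = 1 - g(1 - q)`. -/
def dualDistortion (g : ℝ → ℝ) : ℝ → ℝ := fun q => 1 - g (1 - q)

/-- The distortion risk measure
`ρ_g[X] = -∫_{-∞}^0 (1 - g(P(X > x))) dx + ∫_0^∞ g(P(X > x)) dx`. -/
def rho (P : Measure Ω) (g : ℝ → ℝ) (X : Ω → ℝ) : ℝ :=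
  (- ∫ x in Iio (0:ℝ), (1 - g (rvSurv P X x))) + ∫ x in Ioi (0:ℝ), g (rvSurv P X x)

/-- The two integrals defining the distortion risk measure `ρ_g[X]` are finite. -/
def RhoFinite (P : Measure Ω) (g : ℝ → ℝ) (X : Ω → ℝ) : Prop :=
  IntegrableOn (fun x => 1 - g (rvSurv P X x)) (Iio (0:ℝ)) volume ∧
  IntegrableOn (fun x => g (rvSurv P X x)) (Ioi (0:ℝ)) volume

/-- `U` is uniformly distributed on `[0,1]`. -/
def IsUniform01 (P : Measure Ω) (U : Ω → ℝ) : Prop :=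
  Measurable U ∧ Measure.map U P = volume.restrict (Icc (0:ℝ) 1)

/-- The counter-monotonic sum `S⁻ = F_{X₁}⁻¹(U) + F_{X₂}⁻¹(1 - U)`. -/
def cmSum (P : Measure Ω) (X₁ X₂ : Ω → ℝ) (U : Ω → ℝ) : Ω → ℝ :=
  fun ω => leftInv (rvCdf P X₁) (U ω) + leftInv (rvCdf P X₂) (1 - U ω)

/-- `X` is symmetric: for some `m`, `P(X ≤ m - x) = P(X ≥ m + x)` for all `x`. -/
def IsSymmetricRV (P : Measure Ω) (X : Ω → ℝ) : Prop :=
  ∃ m : ℝ, ∀ x : ℝ, P {ω | X ω ≤ m - x} = P {ω | m + x ≤ X ω}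

/-- Dispersive order `X ≤_disp Y`. -/
def DispLE (P : Measure Ω) (X Y : Ω → ℝ) : Prop :=
  ∀ u v : ℝ, 0 < v → v ≤ u → u < 1 →
    leftInv (rvCdf P X) u - leftInv (rvCdf P X) v ≤
      leftInv (rvCdf P Y) u - leftInv (rvCdf P Y) v

/-- The cdf of `X` is continuous and strictly increasing on `(F⁻¹⁺(0), F⁻¹(1))`. -/
def CdfRegular (P : Measure Ω) (X : Ω → ℝ) : Prop :=
  ContinuousOn (rvCdf P X) (Ioo (rightInv (rvCdf P X) 0) (leftInv (rvCdf P X) 1)) ∧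
  StrictMonoOn (rvCdf P X) (Ioo (rightInv (rvCdf P X) 0) (leftInv (rvCdf P X) 1))

/-- Value-at-Risk `VaR_p[X] = F_X⁻¹(p)`. -/
def VaR (P : Measure Ω) (X : Ω → ℝ) (p : ℝ) : ℝ := leftInv (rvCdf P X) p

/-- Tail-Value-at-Risk `TVaR_p[X] = (1/(1-p)) ∫_p^1 F_X⁻¹(q) dq`. -/
def TVaR (P : Measure Ω) (X : Ω → ℝ) (p : ℝ) : ℝ :=
  (1 - p)⁻¹ * ∫ q in p..1, leftInv (rvCdf P X) q

/-- Left-Tail-Value-at-Risk `LTVaR_p[X] = (1/p) ∫_0^p F_X⁻¹(q) dq`. -/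
def LTVaR (P : Measure Ω) (X : Ω → ℝ) (p : ℝ) : ℝ :=
  p⁻¹ * ∫ q in (0:ℝ)..p, leftInv (rvCdf P X) q

/-- The standard normal cdf `Φ`. -/
def stdNormCdf : ℝ → ℝ := fun x => ((gaussianReal 0 1) (Iic x)).toReal

/-- The inverse `Φ⁻¹` of the standard normal cdf. -/
def stdNormInv : ℝ → ℝ := fun p => sInf {x | p ≤ stdNormCdf x}

/-- The Wang transform distortion function at level `p`. -/
def wangG (p : ℝ) : ℝ → ℝ := fun q => stdNormCdf (stdNormInv q + stdNormInv p)

/-- The Wang transform risk measure at level `p`. -/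
def WT (P : Measure Ω) (X : Ω → ℝ) (p : ℝ) : ℝ := rho P (wangG p) X

/-- `X ~ N(μ, σ²)`. -/
def IsNormalRV (P : Measure Ω) (X : Ω → ℝ) (μ σ : ℝ) : Prop :=
  Measurable X ∧ Measure.map X P = gaussianReal μ (⟨σ ^ 2, sq_nonneg σ⟩ : NNReal)

/-- `X ~ LN(μ, σ²)`, i.e. `X` is distributed as `exp Z` with `Z ~ N(μ, σ²)`. -/
def IsLogNormalRV (P : Measure Ω) (X : Ω → ℝ) (μ σ : ℝ) : Prop :=
  Measurable X ∧
    Measure.map X P = Measure.map Real.exp (gaussianReal μ (⟨σ ^ 2, sq_nonneg σ⟩ : NNReal))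

/-- `X ~ Student(ν)`: density proportional to `(1 + x²/ν)^(-(ν+1)/2)`. -/
def IsStudentRV (P : Measure Ω) (X : Ω → ℝ) (ν : ℝ) : Prop :=
  Measurable X ∧ ∃ c : ℝ, 0 < c ∧
    Measure.map X P =
      volume.withDensity (fun x => ENNReal.ofReal (c * (1 + x ^ 2 / ν) ^ (-((ν + 1) / 2))))

/-- Extension of a distortion function to `ℝ` by constants. -/
def gExt (g : ℝ → ℝ) : ℝ → ℝ := fun q => if q ≤ 0 then 0 else if 1 ≤ q then 1 else g q

open Classical in
/-- The Lebesgue–Stieltjes measure `dg` associated with (the right-continuous modification of)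
the extension of a distortion function `g` to `ℝ`. -/
def lsMeasure (g : ℝ → ℝ) : Measure ℝ :=
  if h : Monotone (gExt g) then h.stieltjesFunction.measure else 0

/-!
Write `Φ` for the standard normal cdf. Since `Φ⁻¹(U)` is standard normal and
`Φ⁻¹(1 - u) = -Φ⁻¹(u)`, almost surely `S⁻ = μ₁ + μ₂ + (σ₁ - σ₂) Φ⁻¹(U)`, so
`S⁻ ~ N(μ₁ + μ₂, (σ₁ - σ₂)²)` (a point mass when `σ₁ = σ₂`).
For `X ~ N(μ, σ²)` the integrand of `ρ_g[X]` is `x ↦ g(1 - Φ((x - μ) / σ))`; the functional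
`f ↦ -∫_{-∞}^0 (1 - f) + ∫_0^∞ f` turns a shift of the argument by `μ` into adding `μ` and a
rescaling by `σ > 0` into multiplying by `σ`, so `ρ_g[X] = μ + σ c_g` with `c_g` its value for the
standard normal. The reflection `x ↦ -x` gives `c_ḡ = -c_g`, and both identities follow by
comparing coefficients of `c_g`, which is `|σ₁ - σ₂|` on the left.
-/

def choquetIntegral (f : ℝ → ℝ) : ℝ :=
  (- ∫ x in Iio (0:ℝ), (1 - f x)) + ∫ x in Ioi (0:ℝ), f x

lemma rho_eq_choquetIntegral (P : Measure Ω) (g : ℝ → ℝ) (X : Ω → ℝ) :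
    rho P g X = choquetIntegral (fun x => g (rvSurv P X x)) := rfl

namespace MeasureTheory.IntegrableOn

variable {f : ℝ → ℝ} {a : ℝ}

lemma Ioi_of_locallyIntegrable (h : IntegrableOn f (Ioi a)) (hf : LocallyIntegrable f)
    (b : ℝ) : IntegrableOn f (Ioi b) :=
  (h.union (hf.integrableOn_isCompact isCompact_Icc : IntegrableOn f (Icc b a))).mono_set
    fun x (hx : b < x) => (lt_or_ge a x).imp id fun hxa => (⟨hx.le, hxa⟩ : x ∈ Icc b a)

lemma Iio_of_locallyIntegrable (h : IntegrableOn f (Iio a)) (hf : LocallyIntegrable f)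
    (b : ℝ) : IntegrableOn f (Iio b) :=
  (h.union (hf.integrableOn_isCompact isCompact_Icc : IntegrableOn f (Icc a b))).mono_set
    fun x (hx : x < b) => (lt_or_ge x a).imp id fun hxa => (⟨hxa, hx.le⟩ : x ∈ Icc a b)

end MeasureTheory.IntegrableOn

section ChoquetIntegral

variable {f : ℝ → ℝ}

lemma choquetIntegral_eq_add_of_basepoint (hf : LocallyIntegrable f) {a : ℝ}
    (h₁ : IntegrableOn (fun x => 1 - f x) (Iio a)) (h₂ : IntegrableOn f (Ioi a)) :
    choquetIntegral f = a + ((- ∫ x in Iio a, (1 - f x)) + ∫ x in Ioi a, f x) := by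
  have hf' : LocallyIntegrable (fun x => 1 - f x) := (locallyIntegrable_const 1).sub hf
  have hIoi := intervalIntegral.integral_Ioi_sub_Ioi' h₂ (h₂.Ioi_of_locallyIntegrable hf 0)
  have hIio := intervalIntegral.integral_Iio_sub_Iio' (h₁.Iio_of_locallyIntegrable hf' 0) h₁
  have hsum : (∫ x in a..0, f x) + ∫ x in a..0, (1 - f x) = -a := by
    rw [← intervalIntegral.integral_add (hf.integrableOn_isCompact isCompact_uIcc).intervalIntegrable
      (hf'.integrableOn_isCompact isCompact_uIcc).intervalIntegrable]
    simp
  rw [choquetIntegral]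
  linarith

lemma choquetIntegral_comp_sub (hf : LocallyIntegrable f) {m : ℝ}
    (h₁ : IntegrableOn (fun x => 1 - f (x - m)) (Iio 0))
    (h₂ : IntegrableOn (fun x => f (x - m)) (Ioi 0)) :
    choquetIntegral (fun x => f (x - m)) = m + choquetIntegral f := by
  have hshift := measurePreserving_sub_right (volume : Measure ℝ) m
  have hemb := measurableEmbedding_subRight m
  have hIio : (fun x => x - m) ⁻¹' Iio (-m) = Iio 0 := by
    rw [preimage_sub_const_Iio, neg_add_cancel]
  have hIoi : (fun x => x - m) ⁻¹' Ioi (-m) = Ioi 0 := by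
    rw [preimage_sub_const_Ioi, neg_add_cancel]
  have h₁' : IntegrableOn (fun x => 1 - f x) (Iio (-m)) :=
    (hshift.integrableOn_comp_preimage hemb).1 (by rw [hIio]; exact h₁)
  have h₂' : IntegrableOn f (Ioi (-m)) :=
    (hshift.integrableOn_comp_preimage hemb).1 (by rw [hIoi]; exact h₂)
  rw [choquetIntegral_eq_add_of_basepoint hf h₁' h₂', choquetIntegral, ← hIio, ← hIoi,
    hshift.setIntegral_preimage_emb hemb (fun x => 1 - f x),
    hshift.setIntegral_preimage_emb hemb f]
  ring

open scoped Pointwise in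
lemma choquetIntegral_comp_div (f : ℝ → ℝ) {σ : ℝ} (hσ : 0 < σ) :
    choquetIntegral (fun x => f (x / σ)) = σ * choquetIntegral f := by
  have hc : 0 < σ⁻¹ := inv_pos.2 hσ
  have hscale : ∀ (F : ℝ → ℝ) (s : Set ℝ), σ⁻¹ • s = s →
      ∫ x in s, F (x / σ) = σ * ∫ x in s, F x := by
    intro F s hs
    simp_rw [div_eq_inv_mul, ← smul_eq_mul (a := σ⁻¹)]
    rw [Measure.setIntegral_comp_smul_of_pos _ _ _ hc, hs]
    simp
  rw [choquetIntegral, choquetIntegral,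
    hscale (fun x => 1 - f x) _ (by rw [LinearOrderedField.smul_Iio hc, mul_zero]),
    hscale f _ (by rw [LinearOrderedField.smul_Ioi hc, mul_zero])]
  ring

lemma choquetIntegral_one_sub_comp_neg (f : ℝ → ℝ) :
    choquetIntegral (fun x => 1 - f (-x)) = -choquetIntegral f := by
  have h₁ : ∫ x in Iio (0:ℝ), (1 - (1 - f (-x))) = ∫ x in Ioi (0:ℝ), f x := by
    simp_rw [sub_sub_cancel]
    rw [← integral_Iic_eq_integral_Iio, integral_comp_neg_Iic, neg_zero]
  have h₂ : ∫ x in Ioi (0:ℝ), (1 - f (-x)) = ∫ x in Iio (0:ℝ), (1 - f x) := by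
    rw [integral_comp_neg_Ioi (f := fun x => 1 - f x), neg_zero, integral_Iic_eq_integral_Iio]
  rw [choquetIntegral, choquetIntegral, h₁, h₂]
  ring

end ChoquetIntegral

namespace ProbabilityTheory

lemma continuous_cdf (μ : Measure ℝ) [IsProbabilityMeasure μ] [NullSingletonClass μ] :
    Continuous (cdf μ) := by
  refine continuous_iff_continuousAt.2 fun x => ?_
  rw [(cdf μ).mono.continuousAt_iff_leftLim_eq_rightLim, StieltjesFunction.rightLim_eq]
  have hjump := (cdf μ).measure_singleton x
  rw [measure_cdf, measure_singleton, eq_comm, ENNReal.ofReal_eq_zero] at hjump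
  exact le_antisymm ((cdf μ).mono.leftLim_le le_rfl) (by linarith)

lemma strictMono_cdf_of_absolutelyContinuous (μ : Measure ℝ) [IsProbabilityMeasure μ]
    (h : volume ≪ μ) : StrictMono (cdf μ) := by
  intro x y hxy
  have hpos : μ (Ioc x y) ≠ 0 := fun h0 => by
    have := h h0
    rw [Real.volume_Ioc, ENNReal.ofReal_eq_zero] at this
    linarith
  rw [← measure_cdf μ, StieltjesFunction.measure_Ioc, ne_eq, ENNReal.ofReal_eq_zero] at hpos
  linarith

instance : NullSingletonClass (gaussianReal 0 1) :=
  ⟨fun _ => gaussianReal_absolutelyContinuous 0 one_ne_zero Real.volume_singleton⟩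

end ProbabilityTheory

section StdNorm

lemma stdNormCdf_eq_cdf : stdNormCdf = cdf (gaussianReal 0 1) := by
  funext x
  rw [cdf_eq_real]
  rfl

lemma strictMono_stdNormCdf : StrictMono stdNormCdf := by
  rw [stdNormCdf_eq_cdf]
  exact strictMono_cdf_of_absolutelyContinuous _ (gaussianReal_absolutelyContinuous' 0 one_ne_zero)

lemma stdNormCdf_lt_one (x : ℝ) : stdNormCdf x < 1 :=
  (strictMono_stdNormCdf (lt_add_one x)).trans_le (stdNormCdf_eq_cdf ▸ cdf_le_one _ _)

lemma gaussianReal_real_Ioi (x : ℝ) : (gaussianReal 0 1).real (Ioi x) = 1 - stdNormCdf x := by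
  rw [← compl_Iic, probReal_compl_eq_one_sub measurableSet_Iic]
  rfl

lemma stdNormCdf_neg (x : ℝ) : stdNormCdf (-x) = 1 - stdNormCdf x := by
  have hsymm : (gaussianReal 0 1).real (Iic (-x)) = (gaussianReal 0 1).real (Ici x) := by
    conv_lhs => rw [← neg_zero, ← gaussianReal_map_neg]
    rw [map_measureReal_apply measurable_neg measurableSet_Iic, neg_preimage, neg_Iic, neg_neg]
  rw [← gaussianReal_real_Ioi, measureReal_congr Ioi_ae_eq_Ici, ← hsymm]
  rfl

lemma exists_stdNormCdf_eq {p : ℝ} (hp : p ∈ Ioo (0:ℝ) 1) : ∃ x, stdNormCdf x = p := by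
  rw [stdNormCdf_eq_cdf]
  refine mem_range_of_exists_le_of_exists_ge (continuous_cdf _) ?_ ?_
  · exact ((tendsto_cdf_atBot _).eventually_lt_const hp.1).exists.imp fun _ => le_of_lt
  · exact ((tendsto_cdf_atTop _).eventually_const_lt hp.2).exists.imp fun _ => le_of_lt

lemma stdNormInv_stdNormCdf (x : ℝ) : stdNormInv (stdNormCdf x) = x := by
  have hset : {y | stdNormCdf x ≤ stdNormCdf y} = Ici x := by
    ext y
    exact strictMono_stdNormCdf.le_iff_le
  rw [stdNormInv, hset, csInf_Ici]

lemma stdNormInv_le_iff {p : ℝ} (hp : p ∈ Ioo (0:ℝ) 1) (t : ℝ) :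
    stdNormInv p ≤ t ↔ p ≤ stdNormCdf t := by
  obtain ⟨x, rfl⟩ := exists_stdNormCdf_eq hp
  rw [stdNormInv_stdNormCdf, strictMono_stdNormCdf.le_iff_le]

lemma stdNormInv_one_sub {p : ℝ} (hp : p ∈ Ioo (0:ℝ) 1) :
    stdNormInv (1 - p) = -stdNormInv p := by
  obtain ⟨x, rfl⟩ := exists_stdNormCdf_eq hp
  rw [← stdNormCdf_neg, stdNormInv_stdNormCdf, stdNormInv_stdNormCdf]

lemma monotoneOn_stdNormInv : MonotoneOn stdNormInv (Ioo 0 1) := by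
  intro p hp q hq hpq
  rw [stdNormInv_le_iff hp]
  obtain ⟨y, rfl⟩ := exists_stdNormCdf_eq hq
  rwa [stdNormInv_stdNormCdf]

lemma hasLaw_stdNormInv : HasLaw stdNormInv (gaussianReal 0 1) (volume.restrict (Ioo 0 1)) := by
  have hmeas : AEMeasurable stdNormInv (volume.restrict (Ioo 0 1)) :=
    aemeasurable_restrict_of_monotoneOn measurableSet_Ioo monotoneOn_stdNormInv
  refine ⟨hmeas, Measure.ext_of_Iic _ _ fun t => ?_⟩
  have hset : stdNormInv ⁻¹' Iic t ∩ Ioo 0 1 = Ioc 0 (stdNormCdf t) := by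
    ext p
    simp only [mem_inter_iff, mem_preimage, mem_Iic, mem_Ioc]
    refine ⟨fun ⟨hle, hp⟩ => ⟨hp.1, (stdNormInv_le_iff hp t).1 hle⟩, fun ⟨hp0, hpt⟩ => ?_⟩
    have hp : p ∈ Ioo (0:ℝ) 1 := ⟨hp0, hpt.trans_lt (stdNormCdf_lt_one t)⟩
    exact ⟨(stdNormInv_le_iff hp t).2 hpt, hp⟩
  rw [Measure.map_apply_of_aemeasurable hmeas measurableSet_Iic,
    Measure.restrict_apply' measurableSet_Ioo, hset, Real.volume_Ioc, sub_zero, ← ofReal_cdf,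
    ← stdNormCdf_eq_cdf]

end StdNorm

section Distortion

variable {g : ℝ → ℝ}

lemma IsDistortion.dual (hg : IsDistortion g) : IsDistortion (dualDistortion g) := by
  obtain ⟨hmono, h0, h1, hmem⟩ := hg
  have hflip : ∀ q ∈ Icc (0:ℝ) 1, 1 - q ∈ Icc (0:ℝ) 1 :=
    fun q hq => ⟨sub_nonneg.2 hq.2, sub_le_self 1 hq.1⟩
  refine ⟨fun p hp q hq hpq => ?_, by simp [dualDistortion, h1], by simp [dualDistortion, h0],
    fun q hq => ?_⟩
  · exact sub_le_sub_left (hmono (hflip q hq) (hflip p hp) (by linarith)) 1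
  · exact hflip _ (hmem _ (hflip q hq))

lemma IsDistortion.antitone_comp_measureReal_Ioi (hg : IsDistortion g) (ν : Measure ℝ)
    [IsProbabilityMeasure ν] : Antitone fun y => g (ν.real (Ioi y)) := by
  have hmem : ∀ y, ν.real (Ioi y) ∈ Icc (0:ℝ) 1 :=
    fun y => ⟨measureReal_nonneg, measureReal_le_one⟩
  exact fun x y hxy => hg.1 (hmem y) (hmem x) (measureReal_mono (Ioi_subset_Ioi hxy))

end Distortion

section GaussianLaw

open scoped NNReal

variable {g : ℝ → ℝ}

lemma gaussianReal_eq_map_stdGaussian (μ : ℝ) (v : ℝ≥0) :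
    gaussianReal μ v = (gaussianReal 0 1).map (fun z => √v * z + μ) := by
  have hcomp : (fun z => √v * z + μ) = (· + μ) ∘ (√v * ·) := rfl
  have hv : NNReal.mk (√v ^ 2) (sq_nonneg _) * 1 = v := by
    rw [mul_one]
    exact NNReal.eq (Real.sq_sqrt v.2)
  rw [hcomp, ← Measure.map_map (measurable_add_const μ) (measurable_const_mul _),
    gaussianReal_map_const_mul, gaussianReal_map_add_const, mul_zero, zero_add, hv]

lemma rvSurv_eq_of_hasLaw {P : Measure Ω} {X : Ω → ℝ} {ν : Measure ℝ} (hX : HasLaw X ν P)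
    (x : ℝ) : rvSurv P X x = ν.real (Ioi x) :=
  congrArg ENNReal.toReal (hX.measure_eq (p := (x < ·)) measurableSet_Ioi)

lemma choquetIntegral_comp_gaussianReal_Ioi (hg : IsDistortion g) (v : ℝ≥0) :
    choquetIntegral (fun y => g ((gaussianReal 0 v).real (Ioi y)))
      = √v * choquetIntegral (fun y => g (1 - stdNormCdf y)) := by
  rcases eq_or_ne v 0 with rfl | hv
  · have hneg : ∀ y ∈ Iio (0:ℝ), 1 - g ((Measure.dirac 0).real (Ioi y)) = 0 :=
      fun y (hy : y < 0) => by simp [measureReal_def, Measure.dirac_apply', hy, hg.2.2.1]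
    have hpos : ∀ y ∈ Ioi (0:ℝ), g ((Measure.dirac 0).real (Ioi y)) = 0 :=
      fun y (hy : 0 < y) => by simp [measureReal_def, Measure.dirac_apply', hy.le, hg.2.1]
    rw [gaussianReal_zero_var, NNReal.coe_zero, Real.sqrt_zero, zero_mul, choquetIntegral,
      setIntegral_congr_fun measurableSet_Iio hneg, setIntegral_congr_fun measurableSet_Ioi hpos]
    simp
  · have hpos : 0 < √v := Real.sqrt_pos.2 (by positivity)
    have hsurv : ∀ y, (gaussianReal 0 v).real (Ioi y) = 1 - stdNormCdf (y / √v) := by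
      intro y
      have hpre : (fun z => √v * z + 0) ⁻¹' Ioi y = Ioi (y / √v) := by
        ext z
        simp [div_lt_iff₀' hpos]
      rw [gaussianReal_eq_map_stdGaussian, map_measureReal_apply (by fun_prop) measurableSet_Ioi,
        hpre, gaussianReal_real_Ioi]
    simp_rw [hsurv]
    exact choquetIntegral_comp_div (fun y => g (1 - stdNormCdf y)) hpos

lemma rho_eq_of_hasLaw_gaussianReal {P : Measure Ω} {X : Ω → ℝ} {μ : ℝ} {v : ℝ≥0}
    (hX : HasLaw X (gaussianReal μ v) P) (hg : IsDistortion g) (hfin : RhoFinite P g X) :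
    rho P g X = μ + √v * choquetIntegral (fun y => g (1 - stdNormCdf y)) := by
  have hsurv : ∀ x, g (rvSurv P X x) = g ((gaussianReal 0 v).real (Ioi (x - μ))) := by
    intro x
    rw [rvSurv_eq_of_hasLaw hX, ← zero_add μ, ← gaussianReal_map_add_const,
      map_measureReal_apply (measurable_add_const _) measurableSet_Ioi, preimage_add_const_Ioi,
      zero_add]
  have hloc := (hg.antitone_comp_measureReal_Ioi (gaussianReal 0 v)).locallyIntegrable
    (μ := volume)
  simp_rw [RhoFinite, hsurv] at hfin
  rw [rho_eq_choquetIntegral]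
  simp_rw [hsurv]
  rw [choquetIntegral_comp_sub hloc hfin.1 hfin.2, choquetIntegral_comp_gaussianReal_Ioi hg]

end GaussianLaw

section CounterMonotonic

open scoped NNReal

variable {P : Measure Ω}

lemma IsUniform01.hasLaw {U : Ω → ℝ} (hU : IsUniform01 P U) :
    HasLaw U (volume.restrict (Ioo 0 1)) P :=
  ⟨hU.1.aemeasurable, by rw [hU.2, Measure.restrict_congr_set Ioo_ae_eq_Icc]⟩

lemma IsUniform01.ae_mem_Ioo {U : Ω → ℝ} (hU : IsUniform01 P U) :
    ∀ᵐ ω ∂P, U ω ∈ Ioo (0:ℝ) 1 :=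
  ae_of_ae_map hU.1.aemeasurable (hU.hasLaw.map_eq ▸ ae_restrict_mem measurableSet_Ioo)

lemma rvCdf_eq_of_hasLaw_gaussianReal {X : Ω → ℝ} {μ : ℝ} {v : ℝ≥0}
    (hX : HasLaw X (gaussianReal μ v) P) (hv : v ≠ 0) (x : ℝ) :
    rvCdf P X x = stdNormCdf ((x - μ) / √v) := by
  have hpos : 0 < √v := Real.sqrt_pos.2 (by positivity)
  have hpre : (fun z => √v * z + μ) ⁻¹' Iic x = Iic ((x - μ) / √v) := by
    ext z
    simp [le_div_iff₀' hpos, le_sub_iff_add_le]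
  rw [rvCdf, hX.measure_eq (p := (· ≤ x)) measurableSet_Iic]
  change ((gaussianReal μ v) (Iic x)).toReal = _
  rw [gaussianReal_eq_map_stdGaussian, Measure.map_apply (by fun_prop) measurableSet_Iic]
  exact congrArg (fun s => ((gaussianReal 0 1) s).toReal) hpre

lemma leftInv_rvCdf_of_hasLaw_gaussianReal {X : Ω → ℝ} {μ : ℝ} {v : ℝ≥0}
    (hX : HasLaw X (gaussianReal μ v) P) (hv : v ≠ 0) {p : ℝ} (hp : p ∈ Ioo (0:ℝ) 1) :
    leftInv (rvCdf P X) p = μ + √v * stdNormInv p := by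
  have hpos : 0 < √v := Real.sqrt_pos.2 (by positivity)
  have hset : {x | p ≤ rvCdf P X x} = Ici (μ + √v * stdNormInv p) := by
    ext x
    simp only [mem_ofPred_eq, mem_Ici, rvCdf_eq_of_hasLaw_gaussianReal hX hv,
      ← stdNormInv_le_iff hp, le_div_iff₀' hpos]
    constructor <;> intro h <;> linarith
  rw [leftInv, hset, csInf_Ici]

lemma IsNormalRV.hasLaw {X : Ω → ℝ} {μ σ : ℝ} (hX : IsNormalRV P X μ σ) :
    HasLaw X (gaussianReal μ (.mk (σ ^ 2) (sq_nonneg σ))) P :=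
  ⟨hX.1.aemeasurable, hX.2⟩

lemma IsNormalRV.leftInv_rvCdf {X : Ω → ℝ} {μ σ : ℝ} (hX : IsNormalRV P X μ σ) (hσ : 0 < σ)
    {p : ℝ} (hp : p ∈ Ioo (0:ℝ) 1) : leftInv (rvCdf P X) p = μ + σ * stdNormInv p := by
  have hv : NNReal.mk (σ ^ 2) (sq_nonneg σ) ≠ 0 := fun h =>
    hσ.ne' (pow_eq_zero_iff two_ne_zero |>.1 (congrArg NNReal.toReal h))
  rw [leftInv_rvCdf_of_hasLaw_gaussianReal hX.hasLaw hv hp, NNReal.coe_mk, Real.sqrt_sq hσ.le]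

lemma hasLaw_cmSum {X₁ X₂ U : Ω → ℝ} {μ₁ μ₂ σ₁ σ₂ : ℝ} (h₁ : IsNormalRV P X₁ μ₁ σ₁)
    (h₂ : IsNormalRV P X₂ μ₂ σ₂) (hσ₁ : 0 < σ₁) (hσ₂ : 0 < σ₂) (hU : IsUniform01 P U) :
    HasLaw (cmSum P X₁ X₂ U) (gaussianReal (μ₁ + μ₂) (.mk ((σ₁ - σ₂) ^ 2) (sq_nonneg _))) P := by
  have hZ : HasLaw (fun ω => stdNormInv (U ω)) (gaussianReal 0 1) P :=
    hasLaw_stdNormInv.comp hU.hasLaw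
  have hlaw := gaussianReal_add_const (gaussianReal_const_mul hZ (σ₁ - σ₂)) (μ₁ + μ₂)
  rw [mul_zero, zero_add, mul_one] at hlaw
  refine hlaw.congr ?_
  filter_upwards [hU.ae_mem_Ioo] with ω hu
  have hu' : 1 - U ω ∈ Ioo (0:ℝ) 1 := ⟨by linarith [hu.2], by linarith [hu.1]⟩
  rw [cmSum, h₁.leftInv_rvCdf hσ₁ hu, h₂.leftInv_rvCdf hσ₂ hu', stdNormInv_one_sub hu]
  ring

end CounterMonotonic

theorem normal_cm_sum_distortion_general
    (P : Measure Ω)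
    (X₁ X₂ U : Ω → ℝ) (μ₁ μ₂ σ₁ σ₂ : ℝ) (hσ₁ : 0 < σ₁) (hσ₂ : 0 < σ₂)
    (h₁ : IsNormalRV P X₁ μ₁ σ₁) (h₂ : IsNormalRV P X₂ μ₂ σ₂)
    (hU : IsUniform01 P U)
    (g : ℝ → ℝ) (hg : IsDistortion g)
    (hfinS : RhoFinite P g (cmSum P X₁ X₂ U))
    (hfin₁ : RhoFinite P g X₁) (hfin₁' : RhoFinite P (dualDistortion g) X₁)
    (hfin₂ : RhoFinite P g X₂) (hfin₂' : RhoFinite P (dualDistortion g) X₂) :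
    (σ₂ ≤ σ₁ →
      rho P g (cmSum P X₁ X₂ U) = rho P g X₁ + rho P (dualDistortion g) X₂) ∧
    (σ₁ < σ₂ →
      rho P g (cmSum P X₁ X₂ U) = rho P (dualDistortion g) X₁ + rho P g X₂) := by
  have hdual : choquetIntegral (fun y => dualDistortion g (1 - stdNormCdf y))
      = -choquetIntegral (fun y => g (1 - stdNormCdf y)) := by
    simpa only [dualDistortion, sub_sub_cancel, stdNormCdf_neg]
      using choquetIntegral_one_sub_comp_neg (fun y => g (1 - stdNormCdf y))
  have hS := rho_eq_of_hasLaw_gaussianReal (hasLaw_cmSum h₁ h₂ hσ₁ hσ₂ hU) hg hfinS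
  have hX₁ := rho_eq_of_hasLaw_gaussianReal h₁.hasLaw hg hfin₁
  have hX₁' := rho_eq_of_hasLaw_gaussianReal h₁.hasLaw hg.dual hfin₁'
  have hX₂ := rho_eq_of_hasLaw_gaussianReal h₂.hasLaw hg hfin₂
  have hX₂' := rho_eq_of_hasLaw_gaussianReal h₂.hasLaw hg.dual hfin₂'
  simp only [NNReal.coe_mk, Real.sqrt_sq_eq_abs, abs_of_pos hσ₁, abs_of_pos hσ₂, hdual]
    at hS hX₁ hX₁' hX₂ hX₂'
  refine ⟨fun hle => ?_, fun hlt => ?_⟩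
  · rw [hS, hX₁, hX₂', abs_of_nonneg (sub_nonneg.2 hle)]
    ring
  · rw [hS, hX₁', hX₂, abs_of_neg (sub_neg.2 hlt)]
    ring

/-- distortion risk measure decomposition of a counter-monotonic
sum of two normal random variables. -/
theorem normal_cm_sum_distortion
    (P : Measure Ω) [IsProbabilityMeasure P]
    (X₁ X₂ U : Ω → ℝ) (μ₁ μ₂ σ₁ σ₂ : ℝ) (hσ₁ : 0 < σ₁) (hσ₂ : 0 < σ₂)
    (h₁ : IsNormalRV P X₁ μ₁ σ₁) (h₂ : IsNormalRV P X₂ μ₂ σ₂)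
    (hU : IsUniform01 P U)
    (g : ℝ → ℝ) (hg : IsDistortion g)
    (hfinS : RhoFinite P g (cmSum P X₁ X₂ U))
    (hfin₁ : RhoFinite P g X₁) (hfin₁' : RhoFinite P (dualDistortion g) X₁)
    (hfin₂ : RhoFinite P g X₂) (hfin₂' : RhoFinite P (dualDistortion g) X₂) :
    (σ₂ ≤ σ₁ →
      rho P g (cmSum P X₁ X₂ U) = rho P g X₁ + rho P (dualDistortion g) X₂) ∧
    (σ₁ < σ₂ →
      rho P g (cmSum P X₁ X₂ U) = rho P (dualDistortion g) X₁ + rho P g X₂) :=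
  normal_cm_sum_distortion_general P X₁ X₂ U μ₁ μ₂ σ₁ σ₂ hσ₁ hσ₂ h₁ h₂ hU g hg hfinS hfin₁ hfin₁'
    hfin₂ hfin₂'
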